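/- For every natural number m ≥ 1, ∑_{l=0}^{⌊(m-1)/2⌋} t_l(m − 2l − 1) = m. -/

import Mathlib

/-- The coefficients `t_k(n)`: `t_k(0) = 1` and
`t_k(n) = ∑_{m=0}^{k} t_m(n-1)/(m + n/2)` for `n ≥ 1`. -/
noncomputable def t : ℕ → ℕ → ℝ
  | _, 0 => 1
  | k, n + 1 => ∑ m ∈ Finset.range (k + 1), t m n / ((m : ℝ) + ((n : ℝ) + 1) / 2)

/-!
Extend `t_k(n)` by zero to negative `n` and let `diagSum N = ∑_{2l + n = N} t_l(n)`. The
recursion gives `t_{l+1}(n) - t_l(n) = t_{l+1}(n-1) / (l + 1 + n/2)`, and on the diagonal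
`2(l + 1) + n = N + 2` this denominator is `(N + 2)/2` for every term at once; the extension by
zero makes the boundary terms satisfy the same identity. Summing gives
`(N + 2) diagSum (N + 2) = (N + 2) diagSum N + 2 diagSum (N + 1)`, which together with
`diagSum 0 = 1` and `diagSum 1 = 2` forces `diagSum N = N + 1`.
-/

open Finset

@[simp]
lemma t_zero_right (k : ℕ) : t k 0 = 1 := rfl

lemma t_succ_succ (k n : ℕ) :
    t (k + 1) (n + 1) = t k (n + 1) + t (k + 1) n / ((k + 1 : ℝ) + (n + 1) / 2) := by
  simp only [t, sum_range_succ _ (k + 1)]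
  push_cast
  ring

lemma t_zero_succ_mul (n : ℕ) : (n + 1 : ℝ) * t 0 (n + 1) = 2 * t 0 n := by
  have hn : (n + 1 : ℝ) ≠ 0 := by positivity
  simp only [t, zero_add, sum_range_one, CharP.cast_eq_zero]
  field_simp

noncomputable def tInt (k : ℕ) (n : ℤ) : ℝ := if n < 0 then 0 else t k n.toNat

lemma tInt_of_neg {k : ℕ} {n : ℤ} (hn : n < 0) : tInt k n = 0 := if_pos hn

@[simp]
lemma tInt_natCast (k n : ℕ) : tInt k n = t k n := by
  simp [tInt]

lemma tInt_succ_sub_mul (l : ℕ) (n : ℤ) :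
    (2 * l + n + 2 : ℝ) * (tInt (l + 1) n - tInt l n) = 2 * tInt (l + 1) (n - 1) := by
  rcases lt_or_ge n 0 with hn | hn
  · rw [tInt_of_neg hn, tInt_of_neg hn, tInt_of_neg (by omega)]
    ring
  obtain ⟨j, rfl⟩ := Int.eq_ofNat_of_zero_le hn
  cases j with
  | zero => simp [tInt]
  | succ j =>
    have hd : (l + 1 : ℝ) + (j + 1) / 2 ≠ 0 := by positivity
    rw [show ((j + 1 : ℕ) : ℤ) - 1 = j by omega, tInt_natCast, tInt_natCast, tInt_natCast,
      t_succ_succ]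
    push_cast
    field_simp
    ring

noncomputable def diagSum (N : ℕ) : ℝ := ∑ l ∈ range (N + 1), tInt l (N - 2 * l)

lemma sum_range_tInt_eq_of_le {N R S : ℕ} (hR : N < 2 * R) (hRS : R ≤ S) :
    ∑ l ∈ range S, tInt l (N - 2 * l) = ∑ l ∈ range R, tInt l (N - 2 * l) := by
  refine (sum_subset (range_subset_range.mpr hRS) fun l _ hl ↦ tInt_of_neg ?_).symm
  simp only [mem_range, not_lt] at hl
  omega

lemma sum_range_tInt_eq_diagSum {N R : ℕ} (hR : N < 2 * R) :
    ∑ l ∈ range R, tInt l (N - 2 * l) = diagSum N := by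
  rcases le_total R (N + 1) with h | h
  · exact (sum_range_tInt_eq_of_le hR h).symm
  · exact sum_range_tInt_eq_of_le (by omega) h

lemma diagSum_add_two (N : ℕ) :
    (N + 2 : ℝ) * diagSum (N + 2) = (N + 2) * diagSum N + 2 * diagSum (N + 1) := by
  have h₂ : diagSum (N + 2) = ∑ l ∈ range (N + 2), tInt (l + 1) (N - 2 * l) + t 0 (N + 2) := by
    rw [← sum_range_tInt_eq_diagSum (R := N + 3) (by omega), sum_range_succ', ← tInt_natCast]
    push_cast
    ring_nf
  have h₀ : diagSum N = ∑ l ∈ range (N + 2), tInt l (N - 2 * l) :=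
    (sum_range_tInt_eq_diagSum (by omega)).symm
  have h₁ :
      diagSum (N + 1) = ∑ l ∈ range (N + 2), tInt (l + 1) (N - 2 * l - 1) + t 0 (N + 1) := by
    rw [← sum_range_tInt_eq_diagSum (R := N + 3) (by omega), sum_range_succ', ← tInt_natCast]
    push_cast
    ring_nf
  have hterm (l : ℕ) : (N + 2 : ℝ) * tInt (l + 1) (N - 2 * l)
      = (N + 2) * tInt l (N - 2 * l) + 2 * tInt (l + 1) (N - 2 * l - 1) := by
    have h := tInt_succ_sub_mul l (N - 2 * l)
    rw [show (2 * l + ((N - 2 * l : ℤ) : ℝ) + 2) = N + 2 by push_cast; ring] at h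
    linarith
  have hzero := t_zero_succ_mul (N + 1)
  push_cast at hzero
  rw [h₂, h₀, h₁, mul_add, mul_sum, sum_congr rfl fun l _ ↦ hterm l, sum_add_distrib, ← mul_sum,
    ← mul_sum]
  linear_combination hzero

theorem diagSum_eq (N : ℕ) : diagSum N = N + 1 := by
  induction N using Nat.twoStepInduction with
  | zero => simp [diagSum, tInt]
  | one =>
    have h := t_zero_succ_mul 0
    norm_num at h
    norm_num [diagSum, sum_range_succ, tInt, h]
  | more N h₀ h₁ =>
    have hN : (N + 2 : ℝ) ≠ 0 := by positivity
    refine mul_left_cancel₀ hN ?_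
    rw [diagSum_add_two, h₀, h₁]
    push_cast
    ring

/-- **Theorem 4** of the paper (the sum rule): for `m ≥ 1`,
`∑_{l=0}^{⌊(m-1)/2⌋} t_l(m − 2l − 1) = m`. -/
theorem t_sum_rule (m : ℕ) (hm : 1 ≤ m) :
    ∑ l ∈ Finset.range ((m - 1) / 2 + 1), t l (m - 2 * l - 1) = (m : ℝ) := by
  obtain ⟨N, rfl⟩ : ∃ N, m = N + 1 := ⟨m - 1, by omega⟩
  have hR : N < 2 * ((N + 1 - 1) / 2 + 1) := by omega
  rw [Nat.cast_succ, ← diagSum_eq, ← sum_range_tInt_eq_diagSum hR]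
  refine sum_congr rfl fun l hl ↦ ?_
  simp only [mem_range] at hl
  rw [show (N : ℤ) - 2 * l = (N + 1 - 2 * l - 1 : ℕ) by omega, tInt_natCast]
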